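/- Let k be the fraction field of a Dedekind domain R of characteristic zero with perfect residue fields at all nonzero primes, and let t_1 ∈ P^1(k̃), where k̃ is a fixed algebraic closure of k. Then there exists a finite set S_1 of primes of k, depending only on t_1, with the following property: for every prime p of k not in S_1 and every t_0 ∈ P^1(k) \ {t_1} such that t_0 and t_1 meet modulo p, there exists a unique prime p' of k(t_1) lying over p with residue degree f_{p'|p} = 1 at which t_0 and t_1 meet. -/

import Mathlib

/-!
Write `t₁ = α` (for `t₁ = ∞` we have `k(t₁) = k` and there is nothing to prove). A prime `Q`
over `p` at which `t₀` and `α` meet gives `c ∈ k` with `v_Q(c) ≥ 0`, `v_Q(β) ≥ 0` and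
`v_Q(c - β) > 0`, where `(c, β)` is `(t₀, α)` or `(1/t₀, 1/α)`; which one occurs depends only on
`v_p(t₀)`, not on `Q`. Choose `0 ≠ r ∈ R` with `γ = rβ` integral and let `d` be the discriminant
of the power basis of `k(γ) = k(α)` generated by `γ`, so that `d x = P(γ)` with `P ∈ R[X]` for
every integral `x ∈ k(α)`. Away from the finitely many primes at which `1/d` is not integral,
`x ≡ y := P(rc)/d (mod Q)` with `y ∈ k` independent of `Q`. Hence `x` is congruent mod `Q` to an
element of `R` (residue degree one), and `x ∈ Q` iff `v_p(y) > 0`, whatever `Q` is (uniqueness).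
-/

open IsDedekindDomain Polynomial
open scoped Multiplicative TensorProduct

noncomputable section

variable (R k : Type) [CommRing R] [IsDedekindDomain R] [Field k] [CharZero k]
  [Algebra R k] [IsFractionRing R k]
/-- The hypothesis that all residue fields of `R` at nonzero primes are perfect. -/
def PerfectResidueFields : Prop :=
  ∀ p : HeightOneSpectrum R,
    PerfectField (IsLocalRing.ResidueField (Localization.AtPrime p.asIdeal))

/-- `P^1(k)`: the projective line over `k`, with `none` playing the role of `∞`. -/
abbrev P1 (k : Type) := Option k

/-- The integral closure of `R` in a fixed algebraic closure of `k`. -/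
abbrev IntClosure : Type := integralClosure R (AlgebraicClosure k)

/-- The natural inclusion `P^1(k) → P^1(k̃)`. -/
def emb : P1 k → P1 (AlgebraicClosure k) := Option.map (algebraMap k (AlgebraicClosure k))

open Classical in
/-- The map `t ↦ 1/t` on `P^1`, with the conventions `1/∞ = 0` and `1/0 = ∞`. -/
def pinv {F : Type} [Field F] : P1 F → P1 F
  | none => some 0
  | some x => if x = 0 then none else some x⁻¹

/-- The subfield `k(t)` of the algebraic closure generated by a point `t ∈ P^1(k̃)`
(equal to `k` itself when `t = ∞`). -/
def kfield : P1 (AlgebraicClosure k) → IntermediateField k (AlgebraicClosure k)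
  | none => ⊥
  | some x => IntermediateField.adjoin k {x}

/-- The minimal polynomial `m_t` of `t ∈ P^1(k̃)` over `k`, set equal to `1` when `t = ∞`. -/
def minpolyOf : P1 (AlgebraicClosure k) → Polynomial k
  | none => 1
  | some x => minpoly k x

/-- A prime ideal `Q` of the integral closure of `R` in `k̃` lies over the prime `p` of `k`. -/
def LiesOver (p : HeightOneSpectrum R) (Q : Ideal (IntClosure R k)) : Prop :=
  ∀ r : R, algebraMap R (IntClosure R k) r ∈ Q ↔ r ∈ p.asIdeal

/-- `v_Q(x) ≥ 0` : `x` can be written as `a/b` with `a, b` integral over `R` and `b ∉ Q`. -/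
def VNonneg (Q : Ideal (IntClosure R k)) (x : AlgebraicClosure k) : Prop :=
  ∃ a b : IntClosure R k, b ∉ Q ∧ (b : AlgebraicClosure k) * x = (a : AlgebraicClosure k)

/-- `v_Q(x) > 0` : `x` can be written as `a/b` with `a, b` integral over `R`, `a ∈ Q`,
`b ∉ Q`. -/
def VPos (Q : Ideal (IntClosure R k)) (x : AlgebraicClosure k) : Prop :=
  ∃ a b : IntClosure R k, a ∈ Q ∧ b ∉ Q ∧ (b : AlgebraicClosure k) * x = (a : AlgebraicClosure k)

/-- The "finite part" of the meeting condition: `v_Q(t₀) ≥ 0`, `v_Q(t₁) ≥ 0` and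
`v_Q(t₀ - t₁) > 0` (it fails by convention if `t₀ = ∞` or `t₁ = ∞`). -/
def FinMeet (Q : Ideal (IntClosure R k)) :
    P1 (AlgebraicClosure k) → P1 (AlgebraicClosure k) → Prop
  | some x, some y => VNonneg R k Q x ∧ VNonneg R k Q y ∧ VPos R k Q (x - y)
  | _, _ => False

/-- `t₀` and `t₁` meet at the prime `Q` (of the integral closure of `R` in `k̃`):
either `v_Q(t₀) ≥ 0`, `v_Q(t₁) ≥ 0`, `v_Q(t₀ - t₁) > 0`, or the same for `1/t₀, 1/t₁`. -/
def MeetsAt (Q : Ideal (IntClosure R k)) (t₀ t₁ : P1 (AlgebraicClosure k)) : Prop :=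
  FinMeet R k Q t₀ t₁ ∨ FinMeet R k Q (pinv t₀) (pinv t₁)

/-- Two distinct points of `P^1(k̃)` meet modulo a prime `p` of `k` if they meet at some
prime of the integral closure of `R` in `k̃` lying over `p`. -/
def MeetsModulo (p : HeightOneSpectrum R) (t₀ t₁ : P1 (AlgebraicClosure k)) : Prop :=
  t₀ ≠ t₁ ∧ ∃ Q : Ideal (IntClosure R k), Q.IsPrime ∧ LiesOver R k p Q ∧ MeetsAt R k Q t₀ t₁

/-- The restriction to `k(t₁)` of the prime `Q` of the integral closure of `R` in `k̃` has
residue degree 1 over `p` : every integral element of `k(t₁)` is congruent mod `Q` to an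
element of `R`. -/
def ResidueDegreeOne (t₁ : P1 (AlgebraicClosure k)) (Q : Ideal (IntClosure R k)) : Prop :=
  ∀ x : IntClosure R k, (x : AlgebraicClosure k) ∈ kfield k t₁ →
    ∃ r : R, x - algebraMap R (IntClosure R k) r ∈ Q

/-- The intersection multiplicity `I_p(t₀, t₁)` equals `n` : it is `v_p(m_{t₁}(t₀))` if
`v_p(t₀) ≥ 0`, and `v_p(m_{1/t₁}(1/t₀))` if `v_p(t₀) ≤ 0`. -/
def IntersectionMultIs (p : HeightOneSpectrum R) (t₀ : P1 k) (t₁ : P1 (AlgebraicClosure k))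
    (n : ℕ) : Prop :=
  match t₀ with
  | none => p.valuation k (Polynomial.eval (0 : k) (minpolyOf k (pinv t₁)))
      = (↑(Multiplicative.ofAdd (-(n : ℤ))) : WithZero (Multiplicative ℤ))
  | some x =>
      (p.valuation k x ≤ 1 ∧ p.valuation k (Polynomial.eval x (minpolyOf k t₁))
        = (↑(Multiplicative.ofAdd (-(n : ℤ))) : WithZero (Multiplicative ℤ)))
      ∨ (1 ≤ p.valuation k x ∧ p.valuation k (Polynomial.eval x⁻¹ (minpolyOf k (pinv t₁)))
        = (↑(Multiplicative.ofAdd (-(n : ℤ))) : WithZero (Multiplicative ℤ)))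

end

variable {R k : Type} [CommRing R] [Field k] [Algebra R k]

theorem coe_algebraMap_intClosure (r : R) :
    ((algebraMap R (IntClosure R k) r : IntClosure R k) : AlgebraicClosure k) =
      algebraMap k (AlgebraicClosure k) (algebraMap R k r) :=
  IsScalarTower.algebraMap_apply R k (AlgebraicClosure k) r

theorem pinv_some_of_ne_zero {F : Type} [Field F] {x : F} (hx : x ≠ 0) :
    pinv (some x) = some x⁻¹ :=
  if_neg hx

section LocalRing

variable {Q : Ideal (IntClosure R k)}

theorem VNonneg.mul (hQ : Q.IsPrime) {x y : AlgebraicClosure k}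
    (hx : VNonneg R k Q x) (hy : VNonneg R k Q y) : VNonneg R k Q (x * y) := by
  obtain ⟨a, b, hb, hab⟩ := hx
  obtain ⟨c, d, hd, hcd⟩ := hy
  refine ⟨a * c, b * d, fun h => (hQ.mem_or_mem h).elim hb hd, ?_⟩
  push_cast
  linear_combination (d * y : AlgebraicClosure k) * hab + (a : AlgebraicClosure k) * hcd

theorem VNonneg.add (hQ : Q.IsPrime) {x y : AlgebraicClosure k}
    (hx : VNonneg R k Q x) (hy : VNonneg R k Q y) : VNonneg R k Q (x + y) := by
  obtain ⟨a, b, hb, hab⟩ := hx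
  obtain ⟨c, d, hd, hcd⟩ := hy
  refine ⟨a * d + c * b, b * d, fun h => (hQ.mem_or_mem h).elim hb hd, ?_⟩
  push_cast
  linear_combination (d : AlgebraicClosure k) * hab + (b : AlgebraicClosure k) * hcd

theorem VNonneg.coe (hQ : Q.IsPrime) (x : IntClosure R k) : VNonneg R k Q x :=
  ⟨x, 1, (Ideal.ne_top_iff_one Q).mp hQ.ne_top, one_mul _⟩

variable (Q) in
def nonnegSubalgebra (hQ : Q.IsPrime) : Subalgebra R (AlgebraicClosure k) where
  carrier := {x | VNonneg R k Q x}
  mul_mem' := VNonneg.mul hQ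
  add_mem' := VNonneg.add hQ
  algebraMap_mem' r := by
    show VNonneg R k Q _
    simpa using VNonneg.coe hQ (algebraMap R _ r)

theorem mem_nonnegSubalgebra {hQ : Q.IsPrime} {x : AlgebraicClosure k} :
    x ∈ nonnegSubalgebra Q hQ ↔ VNonneg R k Q x := Iff.rfl

theorem VPos.vnonneg {x : AlgebraicClosure k} (hx : VPos R k Q x) : VNonneg R k Q x :=
  let ⟨a, b, _, hb, hab⟩ := hx; ⟨a, b, hb, hab⟩

theorem VPos.add (hQ : Q.IsPrime) {x y : AlgebraicClosure k}
    (hx : VPos R k Q x) (hy : VPos R k Q y) : VPos R k Q (x + y) := by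
  obtain ⟨a, b, ha, hb, hab⟩ := hx
  obtain ⟨c, d, hc, hd, hcd⟩ := hy
  refine ⟨a * d + c * b, b * d, Q.add_mem (Q.mul_mem_right _ ha) (Q.mul_mem_right _ hc),
    fun h => (hQ.mem_or_mem h).elim hb hd, ?_⟩
  push_cast
  linear_combination (d : AlgebraicClosure k) * hab + (b : AlgebraicClosure k) * hcd

theorem VPos.neg {x : AlgebraicClosure k} (hx : VPos R k Q x) : VPos R k Q (-x) := by
  obtain ⟨a, b, ha, hb, hab⟩ := hx
  exact ⟨-a, b, Q.neg_mem ha, hb, by push_cast; rw [mul_neg, hab]⟩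

theorem VPos.sub (hQ : Q.IsPrime) {x y : AlgebraicClosure k}
    (hx : VPos R k Q x) (hy : VPos R k Q y) : VPos R k Q (x - y) := by
  simpa only [sub_eq_add_neg] using hx.add hQ hy.neg

theorem VPos.mul (hQ : Q.IsPrime) {x y : AlgebraicClosure k}
    (hx : VPos R k Q x) (hy : VNonneg R k Q y) : VPos R k Q (x * y) := by
  obtain ⟨a, b, ha, hb, hab⟩ := hx
  obtain ⟨c, d, hd, hcd⟩ := hy
  refine ⟨a * c, b * d, Q.mul_mem_right _ ha, fun h => (hQ.mem_or_mem h).elim hb hd, ?_⟩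
  push_cast
  linear_combination (d * y : AlgebraicClosure k) * hab + (a : AlgebraicClosure k) * hcd

theorem vpos_coe_iff (hQ : Q.IsPrime) (x : IntClosure R k) : VPos R k Q x ↔ x ∈ Q := by
  refine ⟨fun ⟨a, b, ha, hb, hab⟩ => ?_,
    fun hx => ⟨x, 1, hx, (Ideal.ne_top_iff_one Q).mp hQ.ne_top, one_mul _⟩⟩
  have hbx : b * x = a := Subtype.coe_injective (by push_cast; exact hab)
  exact (hQ.mem_or_mem (hbx ▸ ha)).resolve_left hb

theorem not_vpos_one (hQ : Q.IsPrime) : ¬ VPos R k Q 1 := by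
  simpa using (vpos_coe_iff hQ 1).not.mpr ((Ideal.ne_top_iff_one Q).mp hQ.ne_top)

theorem VPos.aeval_sub_aeval (hQ : Q.IsPrime) {x y : AlgebraicClosure k}
    (hx : VNonneg R k Q x) (hy : VNonneg R k Q y) (hxy : VPos R k Q (x - y)) (P : R[X]) :
    VPos R k Q (aeval x P - aeval y P) := by
  obtain ⟨z, hz⟩ := sub_dvd_eval_sub (⟨x, hx⟩ : nonnegSubalgebra Q hQ) ⟨y, hy⟩
    (P.map (algebraMap R _))
  have hcoe := congrArg Subtype.val hz
  simp only [eval_map_algebraMap, Subalgebra.coe_sub, Subalgebra.coe_mul,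
    ← Subalgebra.aeval_coe] at hcoe
  exact hcoe ▸ hxy.mul hQ z.2

theorem vnonneg_inv_of_vpos_one_sub {w : AlgebraicClosure k}
    (h : VPos R k Q (1 - w)) : VNonneg R k Q w⁻¹ := by
  obtain ⟨m, n, hm, hn, hmn⟩ := h
  rcases eq_or_ne w 0 with rfl | hw
  · exact ⟨0, n, hn, by simp⟩
  refine ⟨n, n - m, fun h => hn (by simpa using Q.add_mem h hm), ?_⟩
  push_cast
  rw [← hmn]
  field_simp
  ring

theorem vnonneg_and_vpos_sub_of_vpos_inv_sub_inv (hQ : Q.IsPrime)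
    {a b : AlgebraicClosure k} (ha0 : a ≠ 0) (hb0 : b ≠ 0) (ha : VNonneg R k Q a)
    (h : VPos R k Q (a⁻¹ - b⁻¹)) : VNonneg R k Q b ∧ VPos R k Q (a - b) := by
  have hab : VPos R k Q (1 - a * b⁻¹) := by
    convert h.mul hQ ha using 1
    field_simp
  have hb : VNonneg R k Q b := by
    convert ha.mul hQ (vnonneg_inv_of_vpos_one_sub hab) using 1
    field_simp
  refine ⟨hb, ?_⟩
  convert (h.mul hQ (ha.mul hQ hb)).neg using 1
  field_simp
  ring

theorem not_finMeet_none_left (t : P1 (AlgebraicClosure k)) :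
    ¬ FinMeet R k Q none t := id

theorem not_finMeet_none_right (t : P1 (AlgebraicClosure k)) :
    ¬ FinMeet R k Q t none := by
  cases t <;> exact id

theorem meetsAt_some_some {x y : AlgebraicClosure k}
    (h : MeetsAt R k Q (some x) (some y)) :
    FinMeet R k Q (some x) (some y) ∨ x ≠ 0 ∧ y ≠ 0 ∧ FinMeet R k Q (some x⁻¹) (some y⁻¹) := by
  refine h.imp_right fun h => ?_
  by_cases hx : x = 0
  · simp only [hx, pinv, if_true] at h; exact absurd h (not_finMeet_none_left _)
  by_cases hy : y = 0
  · simp only [hy, pinv, if_true] at h; exact absurd h (not_finMeet_none_right _)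
  rw [pinv_some_of_ne_zero hx, pinv_some_of_ne_zero hy] at h
  exact ⟨hx, hy, h⟩

theorem meetsAt_none_some {y : AlgebraicClosure k}
    (h : MeetsAt R k Q none (some y)) : FinMeet R k Q (some 0) (some y⁻¹) := by
  refine h.elim (not_finMeet_none_left _ · |>.elim) fun h => ?_
  by_cases hy : y = 0
  · simp only [hy, pinv, if_true] at h; exact absurd h (not_finMeet_none_right _)
  rwa [pinv_some_of_ne_zero hy] at h

end LocalRing

open IntermediateField in
theorem exists_aeval_eq_mul_of_mem_adjoin [IsDedekindDomain R] [IsFractionRing R k]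
    [CharZero k] {L : Type} [Field L] [Algebra k L] [Algebra R L] [IsScalarTower R k L]
    {γ : L} (hγ : IsIntegral R γ) :
    ∃ d : k, d ≠ 0 ∧ ∀ x : L, IsIntegral R x → x ∈ k⟮γ⟯ →
      ∃ P : R[X], aeval γ P = algebraMap k L d * x := by
  have hγk : IsIntegral k γ := hγ.tower_top
  have := adjoin.finiteDimensional hγk
  have := IsScalarTower.to₁₃₄ R k k⟮γ⟯ L
  let B := adjoin.powerBasis hγk
  refine ⟨Algebra.discr k B.basis, Algebra.discr_not_zero_of_basis k _, fun x hx hxγ => ?_⟩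
  have hinj := (algebraMap k⟮γ⟯ L).injective
  have hgen : algebraMap k⟮γ⟯ L B.gen = γ := AdjoinSimple.algebraMap_gen k γ
  have hB : IsIntegral R B.gen := (isIntegral_algebraMap_iff hinj).1 (by rwa [hgen])
  have hz : IsIntegral R (⟨x, hxγ⟩ : k⟮γ⟯) := (isIntegral_algebraMap_iff hinj).1 hx
  have hmem := Algebra.discr_mul_isIntegral_mem_adjoin k hB hz
  rw [Algebra.adjoin_singleton_eq_range_aeval] at hmem
  obtain ⟨P, hP : aeval B.gen P = _⟩ := hmem
  refine ⟨P, ?_⟩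
  have := congrArg (algebraMap k⟮γ⟯ L) hP
  rwa [← aeval_algebraMap_apply, hgen, Algebra.smul_def, map_mul,
    ← IsScalarTower.algebraMap_apply] at this

section Valuation

variable [IsDedekindDomain R] [IsFractionRing R k] {p : HeightOneSpectrum R}
  {Q : Ideal (IntClosure R k)}

theorem vpos_algebraMap_of_valuation_lt_one (hpQ : LiesOver R k p Q) {y : k}
    (hy : p.valuation k y < 1) : VPos R k Q (algebraMap k (AlgebraicClosure k) y) := by
  obtain ⟨n, d, hnd⟩ := p.exists_primeCompl_mul_eq_of_integer y hy.le
  have hn : p.valuation k (algebraMap R k n) < 1 := by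
    rwa [← hnd, map_mul, (p.valuation_eq_one_iff_notMem).2 d.2, mul_one]
  refine ⟨algebraMap R _ n, algebraMap R _ d, (hpQ n).2 ((p.valuation_lt_one_iff_mem n).1 hn),
    fun h => d.2 ((hpQ d).1 h), ?_⟩
  rw [coe_algebraMap_intClosure, coe_algebraMap_intClosure, ← hnd, map_mul, mul_comm]

theorem vnonneg_algebraMap_of_valuation_le_one (hpQ : LiesOver R k p Q) {y : k}
    (hy : p.valuation k y ≤ 1) : VNonneg R k Q (algebraMap k (AlgebraicClosure k) y) := by
  obtain ⟨n, d, hnd⟩ := p.exists_primeCompl_mul_eq_of_integer y hy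
  refine ⟨algebraMap R _ n, algebraMap R _ d, fun h => d.2 ((hpQ d).1 h), ?_⟩
  rw [coe_algebraMap_intClosure, coe_algebraMap_intClosure, ← hnd, map_mul, mul_comm]

theorem vnonneg_algebraMap_iff (hQ : Q.IsPrime) (hpQ : LiesOver R k p Q) (y : k) :
    VNonneg R k Q (algebraMap k (AlgebraicClosure k) y) ↔ p.valuation k y ≤ 1 := by
  refine ⟨fun hy => ?_, vnonneg_algebraMap_of_valuation_le_one hpQ⟩
  by_contra! hlt
  have hy0 : y ≠ 0 := by rintro rfl; simp at hlt
  have hinv : p.valuation k y⁻¹ < 1 := by rw [map_inv₀]; exact inv_lt_one_of_one_lt₀ hlt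
  apply not_vpos_one hQ
  simpa [hy0] using (vpos_algebraMap_of_valuation_lt_one hpQ hinv).mul hQ hy

theorem vpos_algebraMap_iff (hQ : Q.IsPrime) (hpQ : LiesOver R k p Q) (y : k) :
    VPos R k Q (algebraMap k (AlgebraicClosure k) y) ↔ p.valuation k y < 1 := by
  refine ⟨fun hy => ?_, vpos_algebraMap_of_valuation_lt_one hpQ⟩
  by_contra! hle
  have hy0 : y ≠ 0 := by rintro rfl; simp at hle
  have hinv : p.valuation k y⁻¹ ≤ 1 := by rw [map_inv₀]; exact inv_le_one_of_one_le₀ hle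
  apply not_vpos_one hQ
  simpa [hy0] using hy.mul hQ (vnonneg_algebraMap_of_valuation_le_one hpQ hinv)

theorem exists_sub_mem_of_vpos_sub (hQ : Q.IsPrime) (hpQ : LiesOver R k p Q)
    {x : IntClosure R k} {y : k} (h : VPos R k Q (x - algebraMap k (AlgebraicClosure k) y)) :
    ∃ ρ : R, x - algebraMap R (IntClosure R k) ρ ∈ Q := by
  have hy : p.valuation k y ≤ 1 := by
    rw [← vnonneg_algebraMap_iff hQ hpQ]
    simpa [mem_nonnegSubalgebra] using
      (nonnegSubalgebra Q hQ).sub_mem (VNonneg.coe hQ x) h.vnonneg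
  obtain ⟨ρ, hρ⟩ := p.exists_valuation_sub_lt_of_integer hy 1
  refine ⟨ρ, (vpos_coe_iff hQ _).1 ?_⟩
  convert h.sub hQ ((vpos_algebraMap_iff hQ hpQ _).2 hρ) using 1
  simp only [Subalgebra.coe_sub, coe_algebraMap_intClosure, map_sub]
  ring

theorem mem_iff_valuation_lt_one_of_vpos_sub (hQ : Q.IsPrime) (hpQ : LiesOver R k p Q)
    {x : IntClosure R k} {y : k} (h : VPos R k Q (x - algebraMap k (AlgebraicClosure k) y)) :
    x ∈ Q ↔ p.valuation k y < 1 := by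
  rw [← vpos_coe_iff hQ, ← vpos_algebraMap_iff hQ hpQ]
  exact ⟨fun hx => by simpa using hx.sub hQ h, fun hy => by simpa using h.add hQ hy⟩

theorem exists_finMeet_of_meetsAt (p : HeightOneSpectrum R) (t₀ : P1 k) (α : AlgebraicClosure k) :
    ∃ c : k, ∃ β, (β = α ∨ β = α⁻¹) ∧ ∀ Q : Ideal (IntClosure R k), Q.IsPrime →
      LiesOver R k p Q → MeetsAt R k Q (emb k t₀) (some α) →
        FinMeet R k Q (some (algebraMap k (AlgebraicClosure k) c)) (some β) := by
  rcases t₀ with _ | c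
  · exact ⟨0, α⁻¹, .inr rfl, fun Q _ _ h => by simpa using meetsAt_none_some h⟩
  by_cases hc : p.valuation k c ≤ 1
  · refine ⟨c, α, .inl rfl, fun Q hQ hpQ h => ?_⟩
    rcases meetsAt_some_some h with h | ⟨hc0, hα0, -, -, h⟩
    · exact h
    have hc' := (vnonneg_algebraMap_iff hQ hpQ c).2 hc
    exact ⟨hc', vnonneg_and_vpos_sub_of_vpos_inv_sub_inv hQ hc0 hα0 hc' h⟩
  · refine ⟨c⁻¹, α⁻¹, .inr rfl, fun Q hQ hpQ h => ?_⟩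
    rcases meetsAt_some_some h with h | ⟨-, -, h⟩
    · exact absurd ((vnonneg_algebraMap_iff hQ hpQ c).1 h.1) hc
    · simpa using h

end Valuation

section Meeting

variable [IsDedekindDomain R] [IsFractionRing R k] [CharZero k]

open IntermediateField in
theorem exists_finset_vpos_sub_of_finMeet (β : AlgebraicClosure k) :
    ∃ S : Finset (HeightOneSpectrum R), ∀ p ∉ S, ∀ c : k, ∀ x : IntClosure R k,
      (x : AlgebraicClosure k) ∈ k⟮β⟯ → ∃ y : k, ∀ Q : Ideal (IntClosure R k), Q.IsPrime →
        LiesOver R k p Q → FinMeet R k Q (some (algebraMap k (AlgebraicClosure k) c)) (some β) →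
          VPos R k Q (x - algebraMap k (AlgebraicClosure k) y) := by
  have : Algebra.IsAlgebraic R (AlgebraicClosure k) := by
    have := IsLocalization.isAlgebraic (R := R) k (nonZeroDivisors R)
    exact .trans R k (AlgebraicClosure k)
  obtain ⟨r, hr0, hrβ⟩ := (Algebra.IsAlgebraic.isAlgebraic (R := R) β).exists_integral_multiple
  have hβ : k⟮β⟯ ≤ k⟮r • β⟯ := by
    have hr : algebraMap R k r ≠ 0 := (map_ne_zero_iff _ (IsFractionRing.injective R k)).2 hr0
    have h := smul_mem k⟮r • β⟯ (mem_adjoin_simple_self k (r • β)) (x := (algebraMap R k r)⁻¹)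
    rwa [← algebraMap_smul k r β, inv_smul_smul₀ hr, ← adjoin_simple_le_iff,
      algebraMap_smul] at h
  obtain ⟨d, hd0, hd⟩ := exists_aeval_eq_mul_of_mem_adjoin (k := k) hrβ
  refine ⟨(HeightOneSpectrum.Support.finite R d⁻¹).toFinset, fun p hp c x hx => ?_⟩
  have hdp : p.valuation k d⁻¹ ≤ 1 := by simpa [HeightOneSpectrum.Support] using hp
  obtain ⟨P, hP⟩ := hd x x.2 (hβ hx)
  refine ⟨d⁻¹ * aeval (algebraMap R k r * c) P, fun Q hQ hpQ ⟨hc, hβQ, hcβ⟩ => ?_⟩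
  have hdiff : VPos R k Q (aeval (r • β) P - aeval (r • algebraMap k _ c) P) := by
    refine VPos.aeval_sub_aeval hQ (VNonneg.coe hQ ⟨_, hrβ⟩) ?_ ?_ P
    · exact (nonnegSubalgebra Q hQ).smul_mem hc r
    · convert (hcβ.mul hQ ((nonnegSubalgebra Q hQ).algebraMap_mem r)).neg using 1
      simp only [Algebra.smul_def]
      ring
  convert hdiff.mul hQ ((vnonneg_algebraMap_iff hQ hpQ _).2 hdp) using 1
  have hrc : algebraMap k (AlgebraicClosure k) (aeval (algebraMap R k r * c) P) =
      aeval (r • algebraMap k (AlgebraicClosure k) c) P := by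
    rw [← aeval_algebraMap_apply, map_mul, ← IsScalarTower.algebraMap_apply, Algebra.smul_def]
  have hd0' : algebraMap k (AlgebraicClosure k) d ≠ 0 := (_root_.map_ne_zero _).2 hd0
  rw [map_mul, hrc, hP, map_inv₀]
  field_simp

theorem exists_finset_vpos_sub_of_meetsAt (t₁ : P1 (AlgebraicClosure k)) :
    ∃ S : Finset (HeightOneSpectrum R), ∀ p ∉ S, ∀ t₀ : P1 k, ∀ x : IntClosure R k,
      (x : AlgebraicClosure k) ∈ kfield k t₁ → ∃ y : k, ∀ Q : Ideal (IntClosure R k),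
        Q.IsPrime → LiesOver R k p Q → MeetsAt R k Q (emb k t₀) t₁ →
          VPos R k Q (x - algebraMap k (AlgebraicClosure k) y) := by
  classical
  rcases t₁ with _ | α
  · refine ⟨∅, fun p _ t₀ x hx => ?_⟩
    obtain ⟨y, hy⟩ := IntermediateField.mem_bot.1 hx
    exact ⟨y, fun Q hQ _ _ => by simpa [hy] using (vpos_coe_iff hQ 0).2 Q.zero_mem⟩
  obtain ⟨S₁, hS₁⟩ := exists_finset_vpos_sub_of_finMeet (R := R) α
  obtain ⟨S₂, hS₂⟩ := exists_finset_vpos_sub_of_finMeet (R := R) α⁻¹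
  refine ⟨S₁ ∪ S₂, fun p hp t₀ x hx => ?_⟩
  rw [Finset.mem_union, not_or] at hp
  obtain ⟨c, β, hβ, hmeet⟩ := exists_finMeet_of_meetsAt p t₀ α
  obtain ⟨y, hy⟩ : ∃ y : k, ∀ Q : Ideal (IntClosure R k), Q.IsPrime → LiesOver R k p Q →
      FinMeet R k Q (some (algebraMap k (AlgebraicClosure k) c)) (some β) →
        VPos R k Q (x - algebraMap k (AlgebraicClosure k) y) := by
    rcases hβ with rfl | rfl
    · exact hS₁ p hp.1 c x hx
    · refine hS₂ p hp.2 c x (IntermediateField.adjoin_simple_le_iff.2 ?_ hx)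
      simpa using inv_mem (IntermediateField.mem_adjoin_simple_self k α⁻¹)
  exact ⟨y, fun Q hQ hpQ h => hy Q hQ hpQ (hmeet Q hQ hpQ h)⟩

end Meeting

variable (R k : Type) [CommRing R] [IsDedekindDomain R] [Field k] [CharZero k]
  [Algebra R k] [IsFractionRing R k]

theorem unique_residue_degree_one_prime_of_meeting
    (t₁ : P1 (AlgebraicClosure k)) :
    ∃ S₁ : Finset (HeightOneSpectrum R),
      ∀ p : HeightOneSpectrum R, p ∉ S₁ →
      ∀ t₀ : P1 k, emb k t₀ ≠ t₁ →
        MeetsModulo R k p (emb k t₀) t₁ →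
        (∃ Q : Ideal (IntClosure R k), Q.IsPrime ∧ LiesOver R k p Q ∧
          ResidueDegreeOne R k t₁ Q ∧ MeetsAt R k Q (emb k t₀) t₁) ∧
        (∀ Q₁ Q₂ : Ideal (IntClosure R k),
          (Q₁.IsPrime ∧ LiesOver R k p Q₁ ∧ ResidueDegreeOne R k t₁ Q₁ ∧
            MeetsAt R k Q₁ (emb k t₀) t₁) →
          (Q₂.IsPrime ∧ LiesOver R k p Q₂ ∧ ResidueDegreeOne R k t₁ Q₂ ∧
            MeetsAt R k Q₂ (emb k t₀) t₁) →
          ∀ x : IntClosure R k, (x : AlgebraicClosure k) ∈ kfield k t₁ →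
            (x ∈ Q₁ ↔ x ∈ Q₂)) := by
  obtain ⟨S₁, hS₁⟩ := exists_finset_vpos_sub_of_meetsAt (R := R) t₁
  refine ⟨S₁, fun p hp t₀ _ ⟨_, Q₀, hQ₀, hpQ₀, hmeet₀⟩ =>
    ⟨⟨Q₀, hQ₀, hpQ₀, fun x hx => ?_, hmeet₀⟩, ?_⟩⟩
  · obtain ⟨y, hy⟩ := hS₁ p hp t₀ x hx
    exact exists_sub_mem_of_vpos_sub hQ₀ hpQ₀ (hy Q₀ hQ₀ hpQ₀ hmeet₀)
  · rintro Q₁ Q₂ ⟨hQ₁, hpQ₁, -, hmeet₁⟩ ⟨hQ₂, hpQ₂, -, hmeet₂⟩ x hx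
    obtain ⟨y, hy⟩ := hS₁ p hp t₀ x hx
    rw [mem_iff_valuation_lt_one_of_vpos_sub hQ₁ hpQ₁ (hy Q₁ hQ₁ hpQ₁ hmeet₁),
      mem_iff_valuation_lt_one_of_vpos_sub hQ₂ hpQ₂ (hy Q₂ hQ₂ hpQ₂ hmeet₂)]
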